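/- Let λ : R → S be a homomorphism of commutative rings and σ : L⁻¹ → L⁰ a homomorphism of finitely generated projective R-modules. Then there is a natural isomorphism coker(Hom_S(σ ⊗_R S, − ⊗_R S)) ≅ coker(Hom_R(σ, −)) ⊗_R S of functors Mod-R → Mod-S. -/

import Mathlib

/-!
For a finite projective `L`, base change commutes with `Hom_R(L, -)`: the comparison map
`S ⊗ Hom_R(L, N) → Hom_S(S ⊗ L, S ⊗ N)` is bijective for `L = Rⁿ`, hence for every
retract of `Rⁿ`. Since `S ⊗ -` is right exact, `S ⊗ coker(Hom_R(σ, N))` is the cokernel of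
`S ⊗ Hom_R(σ, N)`, which these comparison isomorphisms identify with
`coker(Hom_S(σ ⊗ S, N ⊗ S))`.
-/

open TensorProduct

universe u

section DefFunctor

variable {R S : Type u} [CommRing R] [CommRing S] [Algebra R S]
variable {L1 L0 : Type u} [AddCommGroup L1] [AddCommGroup L0] [Module R L1] [Module R L0]

/-- `Def_σ(N) = coker(Hom_R(σ, N))`. -/
abbrev DefR (σ : L1 →ₗ[R] L0) (N : Type u) [AddCommGroup N] [Module R N] :=
  (L1 →ₗ[R] N) ⧸ LinearMap.range (σ.lcomp R N)

/-- `Def_{σ ⊗ S}(N ⊗_R S) = coker(Hom_S(σ ⊗_R S, N ⊗_R S))`. -/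
abbrev DefS {R S : Type u} [CommRing R] [CommRing S] [Algebra R S]
    {L1 L0 : Type u} [AddCommGroup L1] [AddCommGroup L0] [Module R L1] [Module R L0]
    (σ : L1 →ₗ[R] L0) (N : Type u) [AddCommGroup N] [Module R N] :=
  @HasQuotient.Quotient ((S ⊗[R] L1) →ₗ[S] (S ⊗[R] N)) _ (Submodule.hasQuotient (M := ((S ⊗[R] L1) →ₗ[S] (S ⊗[R] N))) (R := S))
    (LinearMap.range ((σ.baseChange S).lcomp S (S ⊗[R] N)))

/-- The map `Def_σ(N) → Def_σ(N')` induced by `f : N → N'`. -/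
noncomputable def defRMap (σ : L1 →ₗ[R] L0) {N N' : Type u}
    [AddCommGroup N] [Module R N] [AddCommGroup N'] [Module R N'] (f : N →ₗ[R] N') :
    DefR σ N →ₗ[R] DefR σ N' :=
  Submodule.mapQ _ _ (LinearMap.llcomp R L1 N N' f) (by
    rintro - ⟨g, rfl⟩
    exact ⟨f ∘ₗ g, by ext x; simp⟩)

/-- The map `Def_{σ⊗S}(N ⊗ S) → Def_{σ⊗S}(N' ⊗ S)` induced by `f : N → N'`. -/
noncomputable def defSMap (σ : L1 →ₗ[R] L0) {N N' : Type u}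
    [AddCommGroup N] [Module R N] [AddCommGroup N'] [Module R N'] (f : N →ₗ[R] N') :
    DefS (S := S) σ N →ₗ[S] DefS (S := S) σ N' :=
  Submodule.mapQ _ _
    (LinearMap.llcomp S (S ⊗[R] L1) (S ⊗[R] N) (S ⊗[R] N') (f.baseChange S)) (by
    rintro - ⟨g, rfl⟩
    exact ⟨f.baseChange S ∘ₗ g, by ext x; simp⟩)

end DefFunctor

theorem Function.Bijective.of_retract {α β γ δ : Type*} {e : α → β} {e' : γ → δ}
    {a : α → γ} {b : γ → α} {a' : β → δ} {b' : δ → β}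
    (hba : Function.LeftInverse b a) (hb'a' : Function.LeftInverse b' a')
    (ha : e' ∘ a = a' ∘ e) (hb : e ∘ b = b' ∘ e') (he' : Function.Bijective e') :
    Function.Bijective e := by
  refine ⟨fun x y hxy => hba.injective (he'.injective ?_), fun y => ?_⟩
  · change (e' ∘ a) x = (e' ∘ a) y
    rw [ha, Function.comp_apply, Function.comp_apply, hxy]
  · obtain ⟨z, hz⟩ := he'.surjective (a' y)
    exact ⟨b z, by rw [← Function.comp_apply (f := e), hb, Function.comp_apply, hz, hb'a']⟩

namespace LinearMap

variable {R S : Type*} [CommRing R] [CommRing S] [Algebra R S]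

variable (R S) in
noncomputable def homBaseChange (L N : Type*) [AddCommGroup L] [Module R L]
    [AddCommGroup N] [Module R N] :
    S ⊗[R] (L →ₗ[R] N) →ₗ[S] (S ⊗[R] L →ₗ[S] S ⊗[R] N) :=
  (baseChangeHom R S L N).liftBaseChange S

variable {L F N : Type*} [AddCommGroup L] [Module R L] [AddCommGroup F] [Module R F]
  [AddCommGroup N] [Module R N]

@[simp]
theorem homBaseChange_tmul (s : S) (h : L →ₗ[R] N) :
    homBaseChange R S L N (s ⊗ₜ h) = s • h.baseChange S := rfl

theorem homBaseChange_comp_baseChange_lcomp (f : L →ₗ[R] F) :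
    homBaseChange R S L N ∘ₗ (f.lcomp R N).baseChange S =
      (f.baseChange S).lcomp S (S ⊗[R] N) ∘ₗ homBaseChange R S F N := by
  ext h : 3
  simp [lcomp_apply', baseChange_comp]

theorem homBaseChange_pi_bijective (ι : Type*) [Finite ι] :
    Function.Bijective (homBaseChange R S (ι → R) N) := by
  convert (Module.isBaseChange_map_of_finite_free (R := R) N S ι).equiv.bijective
  funext x
  induction x using TensorProduct.induction_on <;> simp_all [homBaseChange]

theorem homBaseChange_bijective [Module.Finite R L] [Module.Projective R L] :
    Function.Bijective (homBaseChange R S L N) := by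
  obtain ⟨n, p, hp⟩ := Module.Finite.exists_fin' R L
  obtain ⟨i, hpi⟩ := Module.projective_lifting_property p LinearMap.id hp
  have hpi' : ∀ x, p (i x) = x := LinearMap.congr_fun hpi
  refine Function.Bijective.of_retract (a := (p.lcomp R N).baseChange S)
    (b := (i.lcomp R N).baseChange S) (a' := (p.baseChange S).lcomp S (S ⊗[R] N))
    (b' := (i.baseChange S).lcomp S (S ⊗[R] N)) (fun x => ?_) (fun g => ?_)
    (congrArg DFunLike.coe (homBaseChange_comp_baseChange_lcomp p))
    (congrArg DFunLike.coe (homBaseChange_comp_baseChange_lcomp i))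
    (homBaseChange_pi_bijective (Fin n))
  · have : i.lcomp R N ∘ₗ p.lcomp R N = LinearMap.id := by ext; simp [hpi']
    rw [← comp_apply, ← baseChange_comp, this, baseChange_id, id_apply]
  · simp only [lcomp_apply', comp_assoc, ← baseChange_comp, hpi, baseChange_id, comp_id]

variable (R S L N) in
noncomputable def homBaseChangeEquiv [Module.Finite R L] [Module.Projective R L] :
    S ⊗[R] (L →ₗ[R] N) ≃ₗ[S] (S ⊗[R] L →ₗ[S] S ⊗[R] N) :=
  .ofBijective _ homBaseChange_bijective

theorem homBaseChangeEquiv_symm_baseChange [Module.Finite R L] [Module.Projective R L]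
    (h : L →ₗ[R] N) : (homBaseChangeEquiv R S L N).symm (h.baseChange S) = 1 ⊗ₜ h := by
  rw [LinearEquiv.symm_apply_eq]
  exact (one_smul S _).symm

end LinearMap

section DefBaseChange

variable {R S : Type u} [CommRing R] [CommRing S] [Algebra R S]
  {L1 L0 : Type u} [AddCommGroup L1] [AddCommGroup L0] [Module R L1] [Module R L0]

open LinearMap

@[simp]
theorem defRMap_mk (σ : L1 →ₗ[R] L0) {N N' : Type u} [AddCommGroup N] [Module R N]
    [AddCommGroup N'] [Module R N'] (f : N →ₗ[R] N') (h : L1 →ₗ[R] N) :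
    defRMap σ f (Submodule.Quotient.mk h) = Submodule.Quotient.mk (f ∘ₗ h) := rfl

@[simp]
theorem defSMap_mk (σ : L1 →ₗ[R] L0) {N N' : Type u} [AddCommGroup N] [Module R N]
    [AddCommGroup N'] [Module R N'] (f : N →ₗ[R] N') (g : S ⊗[R] L1 →ₗ[S] S ⊗[R] N) :
    defSMap σ f (Submodule.Quotient.mk g) = Submodule.Quotient.mk (f.baseChange S ∘ₗ g) := rfl

variable [Module.Finite R L1] [Module.Projective R L1]
  [Module.Finite R L0] [Module.Projective R L0]

theorem exact_lcomp_baseChange (σ : L1 →ₗ[R] L0) (N : Type u) [AddCommGroup N] [Module R N] :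
    Function.Exact ((σ.baseChange S).lcomp S (S ⊗[R] N))
      ((range (σ.lcomp R N)).mkQ.baseChange S ∘ₗ
        (homBaseChangeEquiv R S L1 N).symm.toLinearMap) := by
  have hR : Function.Exact ((σ.lcomp R N).baseChange S)
      ((range (σ.lcomp R N)).mkQ.baseChange S) :=
    lTensor_exact S (exact_map_mkQ_range _) (Submodule.mkQ_surjective _)
  refine (Function.Exact.iff_of_ladder_linearEquiv (e₁ := homBaseChangeEquiv R S L0 N)
    (e₂ := homBaseChangeEquiv R S L1 N) (e₃ := LinearEquiv.refl S _)
    (homBaseChange_comp_baseChange_lcomp σ).symm ?_).2 hR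
  ext
  simp

/- Not `Function.Exact.linearEquivOfSurjective`: the quotient it forms carries instances that
do not unify with the explicit ones in `DefS`. -/
noncomputable def defBaseChangeMap (σ : L1 →ₗ[R] L0) (N : Type u) [AddCommGroup N]
    [Module R N] :
    DefS (S := S) σ N →ₗ[S] S ⊗[R] DefR σ N :=
  Submodule.liftQ _ ((range (σ.lcomp R N)).mkQ.baseChange S ∘ₗ
    (homBaseChangeEquiv R S L1 N).symm.toLinearMap)
    (exact_lcomp_baseChange σ N).linearMap_ker_eq.ge

theorem defBaseChangeMap_bijective (σ : L1 →ₗ[R] L0) (N : Type u) [AddCommGroup N]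
    [Module R N] :
    Function.Bijective (defBaseChangeMap (S := S) σ N) := by
  have hexact := (exact_lcomp_baseChange (S := S) σ N).linearMap_ker_eq
  refine ⟨ker_eq_bot.mp (Submodule.ker_liftQ_eq_bot _ _ hexact.ge hexact.le), ?_⟩
  rw [← range_eq_top, defBaseChangeMap, Submodule.range_liftQ, range_eq_top, coe_comp]
  exact (baseChange_surjective S (Submodule.mkQ_surjective _)).comp (LinearEquiv.surjective _)

noncomputable def defBaseChangeEquiv (σ : L1 →ₗ[R] L0) (N : Type u) [AddCommGroup N]
    [Module R N] : DefS (S := S) σ N ≃ₗ[S] S ⊗[R] DefR σ N :=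
  .ofBijective _ (defBaseChangeMap_bijective σ N)

theorem defBaseChangeEquiv_symm_tmul (σ : L1 →ₗ[R] L0) (N : Type u) [AddCommGroup N]
    [Module R N] (s : S) (h : L1 →ₗ[R] N) :
    (defBaseChangeEquiv σ N).symm (s ⊗ₜ Submodule.Quotient.mk h) =
      s • Submodule.Quotient.mk (h.baseChange S) := by
  rw [LinearEquiv.symm_apply_eq, map_smul]
  change _ = s • (range (σ.lcomp R N)).mkQ.baseChange S
    ((homBaseChangeEquiv R S L1 N).symm (h.baseChange S))
  rw [homBaseChangeEquiv_symm_baseChange, baseChange_tmul, smul_tmul', smul_eq_mul, mul_one,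
    Submodule.mkQ_apply]

theorem defBaseChangeEquiv_comp_defSMap (σ : L1 →ₗ[R] L0) {N N' : Type u}
    [AddCommGroup N] [Module R N] [AddCommGroup N'] [Module R N'] (f : N →ₗ[R] N') :
    (defBaseChangeEquiv σ N').toLinearMap ∘ₗ defSMap σ f =
      (defRMap σ f).baseChange S ∘ₗ (defBaseChangeEquiv σ N).toLinearMap := by
  rw [← LinearEquiv.comp_toLinearMap_symm_eq, comp_assoc,
    ← LinearEquiv.eq_toLinearMap_symm_comp]
  ext h
  simp [defBaseChangeEquiv_symm_tmul, baseChange_comp]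

end DefBaseChange

/-- for a homomorphism `λ : R → S` of commutative rings and a map
`σ : L⁻¹ → L⁰` of finitely generated projective `R`-modules, there is a natural
isomorphism `coker(Hom_S(σ ⊗_R S, − ⊗_R S)) ≅ coker(Hom_R(σ, −)) ⊗_R S` of functors
`Mod-R → Mod-S`.  The isomorphism is pinned down on generators (which also encodes
naturality, stated explicitly as the second conjunct). -/
theorem stmt8 {R S : Type u} [CommRing R] [CommRing S] [Algebra R S]
    {L1 L0 : Type u} [AddCommGroup L1] [AddCommGroup L0] [Module R L1] [Module R L0]
    [Module.Finite R L1] [Module.Projective R L1]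
    [Module.Finite R L0] [Module.Projective R L0]
    (σ : L1 →ₗ[R] L0) :
    ∃ e : ∀ (N : Type u) (_ : AddCommGroup N) (_ : Module R N),
        DefS (S := S) σ N ≃ₗ[S] (S ⊗[R] DefR σ N),
      (∀ (N : Type u) (i1 : AddCommGroup N) (i2 : Module R N) (s : S) (h : L1 →ₗ[R] N),
        (e N i1 i2).symm (s ⊗ₜ Submodule.Quotient.mk h) =
          s • Submodule.Quotient.mk (h.baseChange S)) ∧
      (∀ (N N' : Type u) (i1 : AddCommGroup N) (i2 : Module R N)
        (i1' : AddCommGroup N') (i2' : Module R N') (f : N →ₗ[R] N'),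
        (e N' i1' i2').toLinearMap ∘ₗ defSMap σ f =
          (defRMap σ f).baseChange S ∘ₗ (e N i1 i2).toLinearMap) :=
  ⟨fun N _ _ => defBaseChangeEquiv σ N, fun N _ _ => defBaseChangeEquiv_symm_tmul σ N,
    fun _ _ _ _ _ _ => defBaseChangeEquiv_comp_defSMap σ⟩
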